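/- Let θ ∈ (0,1) and X₁ be a positive integer such that for every integer x ≥ X₁ the interval [x, x + x^θ] contains a prime number. Then for every prime-power p^k ≥ X₁ (p prime, k ≥ 1), the number of positive integers x that are not prime-powers, satisfy q(x) = p^k, and satisfy gcd(x, P(x)) > 1, is at most p^{kθ−1}. -/

import Mathlib

open scoped Classical

/-- The largest element of ℙ*₁ = ℙ* ∪ {1} (prime-powers together with 1) not exceeding `x`. -/
noncomputable def q (x : ℕ) : ℕ :=
  sSup {m : ℕ | (IsPrimePow m ∨ m = 1) ∧ m ≤ x}

/-- The prime-power map. -/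
noncomputable def P (x : ℕ) : ℕ :=
  if x = 1 then 1
  else if IsPrimePow x then x / x.minFac
  else x - q x

/-- The orbit of `x` under `P`: `orbit x 1 = x` and `orbit x (n+1) = P (orbit x n)`. -/
noncomputable def orbit (x n : ℕ) : ℕ := P^[n - 1] x

/-- The transient length `T x = min {n ≥ 1 : x_n = 1}`. -/
noncomputable def T (x : ℕ) : ℕ := sInf {n : ℕ | 1 ≤ n ∧ orbit x n = 1}

/-- The settling time `S x = min {n ≥ 1 : x_n ∈ ℙ*₁}`. -/
noncomputable def S (x : ℕ) : ℕ :=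
  sInf {n : ℕ | 1 ≤ n ∧ (IsPrimePow (orbit x n) ∨ orbit x n = 1)}

/-!
If `x` is not a prime-power and `q x = p ^ k`, then `P x = x - p ^ k`, so
`gcd (x, P x) = gcd (x, p ^ k)` exceeds `1` only when `p ∣ x`. Such `x` also satisfy
`p ^ k < x < r` for every prime `r > p ^ k`, because `q x` would otherwise be at least `r`.
Taking for `r` the prime of the short interval `[p ^ k, p ^ k + p ^ (k θ)]` leaves at most
`(r - 1 - p ^ k) / p ≤ p ^ (k θ - 1)` multiples of `p` to count. When that prime is `p ^ k`
itself, `k = 1` and Bertrand's postulate supplies a prime in `(p, 2 p]`, which leaves no room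
for any such `x`.
-/

open Finset

lemma le_q {m x : ℕ} (hm : IsPrimePow m ∨ m = 1) (hmx : m ≤ x) : m ≤ q x :=
  le_csSup ⟨x, fun _ hy => hy.2⟩ ⟨hm, hmx⟩

lemma q_le_self (x : ℕ) : q x ≤ x := by
  rcases Set.eq_empty_or_nonempty {m : ℕ | (IsPrimePow m ∨ m = 1) ∧ m ≤ x} with h | h
  · rw [q, h, csSup_empty]
    exact x.zero_le
  · exact csSup_le h fun _ hy => hy.2

lemma lt_of_q_lt {r x : ℕ} (hr : IsPrimePow r) (h : q x < r) : x < r := by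
  by_contra! hrx
  exact (le_q (.inl hr) hrx).not_gt h

lemma P_eq_sub_q {x : ℕ} (hx1 : x ≠ 1) (hx : ¬ IsPrimePow x) : P x = x - q x := by
  rw [P, if_neg hx1, if_neg hx]

lemma gcd_P_eq_gcd_q {x : ℕ} (hx1 : x ≠ 1) (hx : ¬ IsPrimePow x) :
    Nat.gcd x (P x) = Nat.gcd x (q x) := by
  rw [P_eq_sub_q hx1 hx, Nat.gcd_self_sub_right (q_le_self x)]

lemma card_filter_dvd_Ioo_le {p a b : ℕ} (hp : 0 < p) (ha : p ∣ a) :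
    #{x ∈ Ioo a b | p ∣ x} ≤ (b - 1 - a) / p := by
  have hsub : {x ∈ Ioo a b | p ∣ x} ⊆ (Icc 1 ((b - 1 - a) / p)).image (fun j => a + p * j) := by
    intro x hx
    obtain ⟨⟨hax, hxb⟩, c, rfl⟩ := by simpa using hx
    obtain ⟨d, rfl⟩ := ha
    have hdc : d < c := Nat.lt_of_mul_lt_mul_left hax
    refine mem_image.2 ⟨c - d, ?_, by rw [Nat.mul_sub]; omega⟩
    rw [mem_Icc, Nat.le_div_iff_mul_le hp, mul_comm, Nat.mul_sub]
    omega
  calc #{x ∈ Ioo a b | p ∣ x} ≤ #((Icc 1 ((b - 1 - a) / p)).image (fun j => a + p * j)) :=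
        card_le_card hsub
    _ ≤ #(Icc 1 ((b - 1 - a) / p)) := card_image_le
    _ = (b - 1 - a) / p := by simp

lemma div_le_rpow_of_le_add_rpow {p k r : ℕ} {θ : ℝ} (hp : 0 < p) (hlt : p ^ k < r)
    (hr : (r : ℝ) ≤ (p : ℝ) ^ k + ((p : ℝ) ^ k) ^ θ) :
    (((r - 1 - p ^ k) / p : ℕ) : ℝ) ≤ (p : ℝ) ^ ((k : ℝ) * θ - 1) := by
  have hm : (r - 1 - p ^ k) / p * p + p ^ k ≤ r := by
    have := Nat.div_mul_le_self (r - 1 - p ^ k) p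
    omega
  have hpR : (0 : ℝ) < p := by exact_mod_cast hp
  have hmR : (((r - 1 - p ^ k) / p : ℕ) : ℝ) * p + (p : ℝ) ^ k ≤ r := by exact_mod_cast hm
  rw [Real.rpow_sub hpR, Real.rpow_one, le_div_iff₀ hpR, Real.rpow_mul hpR.le,
    Real.rpow_natCast]
  linarith

def nonCoprimeFiber (n : ℕ) : Set ℕ :=
  {x | ¬ IsPrimePow x ∧ q x = n ∧ 1 < Nat.gcd x (P x)}

section Fiber

variable {p k : ℕ}

lemma dvd_and_lt_of_mem_nonCoprimeFiber (hp : p.Prime) (hk : k ≠ 0) {x : ℕ}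
    (hx : x ∈ nonCoprimeFiber (p ^ k)) : p ∣ x ∧ p ^ k < x := by
  obtain ⟨hx, hq, hgcd⟩ := hx
  have hlt : p ^ k < x := by
    refine lt_of_le_of_ne (hq ▸ q_le_self x) ?_
    rintro rfl
    exact hx (hp.prime.isPrimePow.pow hk)
  refine ⟨?_, hlt⟩
  have hx1 : x ≠ 1 := by have := pow_pos hp.pos k; omega
  rw [gcd_P_eq_gcd_q hx1 hx, hq] at hgcd
  by_contra hpx
  exact hgcd.ne' (((hp.coprime_iff_not_dvd.2 hpx).symm).pow_right k)

lemma nonCoprimeFiber_subset_Ioo (hp : p.Prime) (hk : k ≠ 0) {r : ℕ} (hr : IsPrimePow r)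
    (hkr : p ^ k < r) :
    nonCoprimeFiber (p ^ k) ⊆ ↑{x ∈ Ioo (p ^ k) r | p ∣ x} := by
  intro x hx
  obtain ⟨hpx, hlt⟩ := dvd_and_lt_of_mem_nonCoprimeFiber hp hk hx
  have hxr : x < r := lt_of_q_lt hr (hx.2.1 ▸ hkr)
  simpa using ⟨⟨hlt, hxr⟩, hpx⟩

lemma nonCoprimeFiber_finite_and_card_le {r : ℕ} (hp : p.Prime) (hk : k ≠ 0)
    (hr : IsPrimePow r) (hkr : p ^ k < r) :
    (nonCoprimeFiber (p ^ k)).Finite ∧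
      Nat.card (nonCoprimeFiber (p ^ k)) ≤ (r - 1 - p ^ k) / p := by
  have hsub := nonCoprimeFiber_subset_Ioo hp hk hr hkr
  refine ⟨(Finset.finite_toSet _).subset hsub, ?_⟩
  calc Nat.card (nonCoprimeFiber (p ^ k))
      ≤ Nat.card (↑{x ∈ Ioo (p ^ k) r | p ∣ x} : Set ℕ) := Nat.card_mono (finite_toSet _) hsub
    _ = #{x ∈ Ioo (p ^ k) r | p ∣ x} := by rw [Nat.card_coe_set_eq, Set.ncard_coe_finset]
    _ ≤ (r - 1 - p ^ k) / p := card_filter_dvd_Ioo_le hp.pos (dvd_pow_self p hk)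

end Fiber

theorem stmt_10_general (θ : ℝ) (X₁ : ℕ)
    (hprime : ∀ x : ℕ, X₁ ≤ x →
      ∃ r : ℕ, r.Prime ∧ (x : ℝ) ≤ r ∧ (r : ℝ) ≤ (x : ℝ) + (x : ℝ) ^ θ)
    (p k : ℕ) (hp : p.Prime) (hk : 1 ≤ k) (hpk : X₁ ≤ p ^ k) :
    {x : ℕ | ¬ IsPrimePow x ∧ q x = p ^ k ∧ 1 < Nat.gcd x (P x)}.Finite ∧
    (Nat.card {x : ℕ | ¬ IsPrimePow x ∧ q x = p ^ k ∧ 1 < Nat.gcd x (P x)} : ℝ) ≤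
      (p : ℝ) ^ ((k : ℝ) * θ - 1) := by
  change (nonCoprimeFiber (p ^ k)).Finite ∧ (Nat.card (nonCoprimeFiber (p ^ k)) : ℝ) ≤ _
  obtain ⟨r, hr, hpkr, hr_le⟩ := hprime (p ^ k) hpk
  push_cast at hpkr hr_le
  rcases (show p ^ k ≤ r by exact_mod_cast hpkr).eq_or_lt with heq | hlt
  · obtain ⟨rfl, rfl⟩ := hr.pow_eq_iff.1 heq
    obtain ⟨r', hr', hpr', hr'_le⟩ := Nat.exists_prime_lt_and_le_two_mul p hp.ne_zero
    obtain ⟨hfin, hcard⟩ := nonCoprimeFiber_finite_and_card_le hp one_ne_zero hr'.isPrimePow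
      (by rwa [pow_one])
    have hzero : (r' - 1 - p ^ 1) / p = 0 := Nat.div_eq_of_lt (by rw [pow_one]; omega)
    refine ⟨hfin, ?_⟩
    rw [hzero, Nat.le_zero] at hcard
    rw [hcard, Nat.cast_zero]
    positivity
  · obtain ⟨hfin, hcard⟩ := nonCoprimeFiber_finite_and_card_le hp (by omega) hr.isPrimePow hlt
    exact ⟨hfin, (Nat.cast_le.2 hcard).trans (div_le_rpow_of_le_add_rpow hp.pos hlt hr_le)⟩

theorem stmt_10 (θ : ℝ) (hθ : θ ∈ Set.Ioo (0 : ℝ) 1) (X₁ : ℕ) (hX₁ : 0 < X₁)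
    (hprime : ∀ x : ℕ, X₁ ≤ x →
      ∃ r : ℕ, r.Prime ∧ (x : ℝ) ≤ r ∧ (r : ℝ) ≤ (x : ℝ) + (x : ℝ) ^ θ)
    (p k : ℕ) (hp : p.Prime) (hk : 1 ≤ k) (hpk : X₁ ≤ p ^ k) :
    {x : ℕ | ¬ IsPrimePow x ∧ q x = p ^ k ∧ 1 < Nat.gcd x (P x)}.Finite ∧
    (Nat.card {x : ℕ | ¬ IsPrimePow x ∧ q x = p ^ k ∧ 1 < Nat.gcd x (P x)} : ℝ) ≤
      (p : ℝ) ^ ((k : ℝ) * θ - 1) :=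
  stmt_10_general θ X₁ hprime p k hp hk hpk
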